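/- arXiv:1812.10151 — 2 statements merged into one kernel-verified Lean document; each statement's English description precedes it below -/
import Mathlib

section
/- Let A₁, A₂ ⊆ ℝⁿ be two open, connected, disjoint sets. Suppose there is a nonempty open box B contained in the interior of closure(A₁) ∪ closure(A₂) such that B ∩ A₁ ≠ ∅ and B ∩ A₂ ≠ ∅. Then the interior of closure(A₁) ∪ closure(A₂) is connected. -/
/-! The box `B` joins `A₁` to `A₂`, so `A₁ ∪ B ∪ A₂` is connected. It lies in
`interior (closure A₁ ∪ closure A₂)` (the `Aᵢ` being open) and is dense in it, and a set
squeezed between a connected set and its closure is connected. -/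

/-- An open box in `ℝⁿ` determined by endpoints `a b : Fin n → ℝ`. -/
def openBox {n : ℕ} (a b : Fin n → ℝ) : Set (Fin n → ℝ) :=
  Set.pi Set.univ (fun i => Set.Ioo (a i) (b i))

open Set

theorem isPreconnected_openBox {n : ℕ} (a b : Fin n → ℝ) : IsPreconnected (openBox a b) :=
  isPreconnected_univ_pi fun _ => isPreconnected_Ioo

theorem IsOpen.subset_interior_closure_union_left {X : Type*} [TopologicalSpace X]
    {s : Set X} (hs : IsOpen s) (t : Set X) : s ⊆ interior (closure s ∪ t) :=
  hs.subset_interior_closure.trans (interior_mono subset_union_left)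

theorem isConnected_interior_closure_union_of_bridge {X : Type*} [TopologicalSpace X]
    {A₁ A₂ C : Set X} (h1o : IsOpen A₁) (h2o : IsOpen A₂)
    (h1c : IsConnected A₁) (h2c : IsConnected A₂) (hC : IsPreconnected C)
    (hCsub : C ⊆ interior (closure A₁ ∪ closure A₂))
    (hC1 : (A₁ ∩ C).Nonempty) (hC2 : (C ∩ A₂).Nonempty) :
    IsConnected (interior (closure A₁ ∪ closure A₂)) := by
  have hA₁C : IsConnected (A₁ ∪ C) := ⟨h1c.nonempty.mono subset_union_left, h1c.2.union' hC1 hC⟩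
  have hbridge : IsConnected (A₁ ∪ C ∪ A₂) :=
    hA₁C.union (hC2.mono (inter_subset_inter_left _ subset_union_right)) h2c
  refine hbridge.subset_closure ?_ ?_
  · refine union_subset (union_subset (h1o.subset_interior_closure_union_left _) hCsub) ?_
    rw [union_comm (closure A₁)]
    exact h2o.subset_interior_closure_union_left _
  · rw [closure_union, closure_union]
    exact interior_subset.trans (union_subset_union_left _ subset_union_left)

theorem statement1_general {n : ℕ} (A₁ A₂ : Set (Fin n → ℝ))
    (h1o : IsOpen A₁) (h2o : IsOpen A₂)
    (h1c : IsConnected A₁) (h2c : IsConnected A₂)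
    (a b : Fin n → ℝ)
    (hBsub : openBox a b ⊆ interior (closure A₁ ∪ closure A₂))
    (hB1 : (openBox a b ∩ A₁).Nonempty) (hB2 : (openBox a b ∩ A₂).Nonempty) :
    IsConnected (interior (closure A₁ ∪ closure A₂)) :=
  isConnected_interior_closure_union_of_bridge h1o h2o h1c h2c (isPreconnected_openBox a b)
    hBsub (inter_comm _ _ ▸ hB1) hB2

/-- If `A₁, A₂ ⊆ ℝⁿ` are open, connected and disjoint, and some nonempty open box `B`
contained in `interior (closure A₁ ∪ closure A₂)` meets both `A₁` and `A₂`, then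
`interior (closure A₁ ∪ closure A₂)` is connected. -/
theorem statement1 {n : ℕ} (A₁ A₂ : Set (Fin n → ℝ))
    (h1o : IsOpen A₁) (h2o : IsOpen A₂)
    (h1c : IsConnected A₁) (h2c : IsConnected A₂)
    (hdisj : Disjoint A₁ A₂)
    (a b : Fin n → ℝ) (hBne : (openBox a b).Nonempty)
    (hBsub : openBox a b ⊆ interior (closure A₁ ∪ closure A₂))
    (hB1 : (openBox a b ∩ A₁).Nonempty) (hB2 : (openBox a b ∩ A₂).Nonempty) :
    IsConnected (interior (closure A₁ ∪ closure A₂)) :=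
  statement1_general A₁ A₂ h1o h2o h1c h2c a b hBsub hB1 hB2
end

section
/- Let A = {2^k : k ∈ ℤ} ⊆ (0,∞), and define f : (0,∞) → ℝ by f(x) = (x − t)(x − 2t) for x ∈ [t, 2t), where t = 2^⌊log₂ x⌋ is the largest element of A not exceeding x. Then f is continuous on (0,∞) but not continuously differentiable at the points of A, and the zero set of f is exactly A; in particular, f is not semialgebraic. -/
/-- Semialgebraic subsets of `ℝⁿ`: the boolean algebra generated by zero sets and
positivity sets of real polynomials in `n` variables. -/
inductive IsSemialgebraic {n : ℕ} : Set (Fin n → ℝ) → Prop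
  | zero_set (p : MvPolynomial (Fin n) ℝ) :
      IsSemialgebraic {x | MvPolynomial.eval x p = 0}
  | pos_set (p : MvPolynomial (Fin n) ℝ) :
      IsSemialgebraic {x | 0 < MvPolynomial.eval x p}
  | union {s t : Set (Fin n → ℝ)} :
      IsSemialgebraic s → IsSemialgebraic t → IsSemialgebraic (s ∪ t)
  | compl {s : Set (Fin n → ℝ)} : IsSemialgebraic s → IsSemialgebraic sᶜ

/-- The largest element `2^⌊log₂ x⌋` of `2^ℤ` not exceeding `x` (for `x > 0`). -/
noncomputable def pow2floor (x : ℝ) : ℝ := (2 : ℝ) ^ (⌊Real.logb 2 x⌋)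

/-- The gluing `f(x) = (x − t)(x − 2t)` with `t = 2^⌊log₂ x⌋`. -/
noncomputable def fglue (x : ℝ) : ℝ := (x - pow2floor x) * (x - 2 * pow2floor x)


/-! On `[2 ^ k, 2 ^ (k + 1)]` the function `fglue` is the quadratic `(x - 2 ^ k) (x - 2 ^ (k + 1))`,
which vanishes at both ends, so the pieces glue continuously. Moreover `fglue ≤ 0` with zeros
exactly at `2 ^ ℤ`, so each `2 ^ k` is a local maximum, while the right derivative there is
`-2 ^ k ≠ 0`.

Pulling back along a polynomial curve, the frontier of a semialgebraic set stays inside the roots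
of finitely many nonzero polynomials, hence is finite. The graph of `fglue` pulls back along the
axis `t ↦ (t, 0)` to `2 ^ ℤ`, which is countable, hence has empty interior, and is infinite. -/

open Real Set Filter Topology Polynomial

lemma pow2floor_eq_zpow {k : ℤ} {x : ℝ} (hx : x ∈ Ico ((2 : ℝ) ^ k) (2 * 2 ^ k)) :
    pow2floor x = 2 ^ k := by
  have hx0 : 0 < x := (zpow_pos two_pos k).trans_le hx.1
  have hlog : Int.log 2 x = k := by
    refine le_antisymm ?_ ((Int.zpow_le_iff_le_log one_lt_two hx0).1 (by exact_mod_cast hx.1))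
    rw [← Int.lt_add_one_iff, ← Int.lt_zpow_iff_log_lt one_lt_two hx0]
    simpa [zpow_add_one₀, mul_comm] using hx.2
  rw [pow2floor, ← hlog, ← Real.floor_logb_natCast hx0.le]
  norm_num

lemma mem_Ico_pow2floor {x : ℝ} (hx : 0 < x) : x ∈ Ico (pow2floor x) (2 * pow2floor x) := by
  have h := Real.floor_logb_natCast (b := 2) hx.le
  rw [pow2floor]
  rw [Nat.cast_ofNat] at h
  rw [h]
  exact ⟨by exact_mod_cast Int.zpow_log_le_self one_lt_two hx, by
    simpa [zpow_add_one₀, mul_comm] using Int.lt_zpow_succ_log_self one_lt_two x⟩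

lemma exists_mem_Ioc_zpow_two {x : ℝ} (hx : 0 < x) :
    ∃ k : ℤ, x ∈ Ioc ((2 : ℝ) ^ k) (2 * 2 ^ k) :=
  ⟨Int.clog 2 x - 1, by exact_mod_cast Int.zpow_pred_clog_lt_self one_lt_two hx, by
    rw [← zpow_one_add₀ two_ne_zero, add_sub_cancel]
    exact_mod_cast Int.self_le_zpow_clog one_lt_two x⟩

lemma pow2floor_zpow (k : ℤ) : pow2floor ((2 : ℝ) ^ k) = 2 ^ k :=
  pow2floor_eq_zpow ⟨le_rfl, lt_two_mul_self (zpow_pos two_pos k)⟩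

lemma fglue_zpow (k : ℤ) : fglue ((2 : ℝ) ^ k) = 0 := by
  rw [fglue, pow2floor_zpow, sub_self, zero_mul]

lemma fglue_eqOn_Icc (k : ℤ) :
    EqOn fglue (fun x => (x - 2 ^ k) * (x - 2 * 2 ^ k)) (Icc ((2 : ℝ) ^ k) (2 * 2 ^ k)) := by
  intro x hx
  rcases hx.2.lt_or_eq with hlt | rfl
  · simp only [fglue, pow2floor_eq_zpow ⟨hx.1, hlt⟩]
  · rw [← mul_comm, ← zpow_add_one₀ two_ne_zero, fglue_zpow]
    simp

lemma fglue_nonpos {x : ℝ} (hx : 0 < x) : fglue x ≤ 0 :=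
  have h := mem_Ico_pow2floor hx
  mul_nonpos_of_nonneg_of_nonpos (sub_nonneg.2 h.1) (sub_nonpos.2 h.2.le)

lemma fglue_eq_zero_iff {x : ℝ} (hx : 0 < x) : fglue x = 0 ↔ x = pow2floor x := by
  have h := mem_Ico_pow2floor hx
  rw [fglue, mul_eq_zero, sub_eq_zero, sub_eq_zero, or_iff_left h.2.ne]

lemma fglue_continuousAt {x : ℝ} (hx : 0 < x) : ContinuousAt fglue x := by
  have piece_continuousWithinAt : ∀ k : ℤ, x ∈ Icc ((2 : ℝ) ^ k) (2 * 2 ^ k) →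
      ContinuousWithinAt fglue (Icc (2 ^ k) (2 * 2 ^ k)) x := fun k hk =>
    (by fun_prop : Continuous fun y : ℝ => (y - 2 ^ k) * (y - 2 * 2 ^ k)).continuousWithinAt.congr
      (fglue_eqOn_Icc k) (fglue_eqOn_Icc k hk)
  obtain ⟨j, hj⟩ := exists_mem_Ioc_zpow_two hx
  have hk := mem_Ico_pow2floor hx
  exact continuousAt_iff_continuous_left_right.2
    ⟨(piece_continuousWithinAt j (Ioc_subset_Icc_self hj)).mono_of_mem_nhdsWithin
      (Icc_mem_nhdsLE_of_mem hj),
     (piece_continuousWithinAt _ (Ico_subset_Icc_self hk)).mono_of_mem_nhdsWithin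
      (Icc_mem_nhdsGE_of_mem hk)⟩

lemma fglue_not_differentiableAt (k : ℤ) : ¬ DifferentiableAt ℝ fglue ((2 : ℝ) ^ k) := by
  set a : ℝ := 2 ^ k
  have ha : 0 < a := zpow_pos two_pos k
  have hmax : IsLocalMax fglue a := by
    filter_upwards [Ioi_mem_nhds ha] with x hx
    rw [fglue_zpow]
    exact fglue_nonpos hx
  have hright : HasDerivWithinAt fglue (-a) (Ici a) a := by
    have h := (((hasDerivAt_id a).sub_const a).mul ((hasDerivAt_id a).sub_const (2 * a)))
    simp only [id_eq, one_mul, mul_one, sub_self, add_zero] at h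
    exact ((h.hasDerivWithinAt.congr_of_mem (fglue_eqOn_Icc k) ⟨le_rfl, by linarith⟩)
      |>.mono_of_mem_nhdsWithin (Icc_mem_nhdsGE (by linarith))).congr_deriv (by ring)
  intro hd
  have h0 := (uniqueDiffWithinAt_Ici a).eq_deriv _ hd.hasDerivAt.hasDerivWithinAt hright
  rw [hmax.deriv_eq_zero] at h0
  linarith

section Semialgebraic

variable {n : ℕ}

lemma MvPolynomial.eval_polynomial_eval (v : Fin n → ℝ[X]) (p : MvPolynomial (Fin n) ℝ)
    (t : ℝ) : MvPolynomial.eval (fun i => (v i).eval t) p = (MvPolynomial.aeval v p).eval t := by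
  simpa [MvPolynomial.coe_aeval_eq_eval] using
    (MvPolynomial.comp_aeval_apply (Polynomial.aeval t) p (f := v)).symm

lemma Polynomial.frontier_setOf_eval_eq_zero_finite (q : ℝ[X]) :
    (frontier {t | q.eval t = 0}).Finite := by
  rcases eq_or_ne q 0 with rfl | hq
  · simp
  · exact (q.finite_setOfPred_isRoot hq).subset
      (isClosed_eq q.continuous continuous_const).frontier_subset

lemma Polynomial.frontier_setOf_eval_pos_finite (q : ℝ[X]) :
    (frontier {t | 0 < q.eval t}).Finite := by
  rcases eq_or_ne q 0 with rfl | hq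
  · simp
  · exact (q.finite_setOfPred_isRoot hq).subset
      ((frontier_lt_subset_eq continuous_const q.continuous).trans fun _ ht => ht.symm)

lemma IsSemialgebraic.frontier_preimage_polynomial_curve_finite {s : Set (Fin n → ℝ)}
    (hs : IsSemialgebraic s) (v : Fin n → ℝ[X]) :
    (frontier ((fun t i => (v i).eval t) ⁻¹' s)).Finite := by
  induction hs with
  | zero_set p =>
    simpa only [preimage_ofPred_eq, MvPolynomial.eval_polynomial_eval] using
      (MvPolynomial.aeval v p).frontier_setOf_eval_eq_zero_finite
  | pos_set p =>
    simpa only [preimage_ofPred_eq, MvPolynomial.eval_polynomial_eval] using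
      (MvPolynomial.aeval v p).frontier_setOf_eval_pos_finite
  | union _ _ ihs iht =>
    rw [preimage_union]
    exact (ihs.union iht).subset (frontier_union_subset _ _ |>.trans
      (union_subset_union inter_subset_left inter_subset_right))
  | compl _ ihs =>
    rwa [preimage_compl, frontier_compl]

end Semialgebraic

lemma Set.Countable.subset_frontier {s : Set ℝ} (hs : s.Countable) : s ⊆ frontier s := by
  rw [frontier, interior_eq_empty_iff_dense_compl.2 (hs.dense_compl ℝ), sdiff_empty]
  exact subset_closure

lemma fglue_zero_set :
    {x ∈ Ioi (0 : ℝ) | fglue x = 0} = {x : ℝ | ∃ k : ℤ, x = (2 : ℝ) ^ k} := by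
  ext x
  constructor
  · rintro ⟨hx, h0⟩
    exact ⟨_, (fglue_eq_zero_iff hx).1 h0⟩
  · rintro ⟨k, rfl⟩
    exact ⟨mem_Ioi.2 (zpow_pos two_pos k), fglue_zpow k⟩

lemma not_isSemialgebraic_graph_fglue :
    ¬ IsSemialgebraic {z : Fin 2 → ℝ | 0 < z 0 ∧ z 1 = fglue (z 0)} := by
  intro h
  have hfin := h.frontier_preimage_polynomial_curve_finite ![X, 0]
  have hpre : (fun t i => (![X, 0] i).eval t) ⁻¹'
      {z : Fin 2 → ℝ | 0 < z 0 ∧ z 1 = fglue (z 0)} = range fun k : ℤ => (2 : ℝ) ^ k := by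
    ext t
    simpa [eq_comm] using congrArg (t ∈ ·) fglue_zero_set
  rw [hpre] at hfin
  exact ((infinite_range_of_injective (zpow_right_injective₀ two_pos (by norm_num))).mono
    (countable_range _).subset_frontier) hfin

/-- `fglue` is continuous on `(0,∞)`, not differentiable at the points of `2^ℤ`, its zero
set in `(0,∞)` is exactly `2^ℤ`, and it is not semialgebraic. -/
theorem statement11 :
    ContinuousOn fglue (Set.Ioi 0) ∧
    (∀ k : ℤ, ¬ DifferentiableAt ℝ fglue ((2 : ℝ) ^ k)) ∧
    {x ∈ Set.Ioi (0 : ℝ) | fglue x = 0} = {x : ℝ | ∃ k : ℤ, x = (2 : ℝ) ^ k} ∧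
    ¬ IsSemialgebraic {z : Fin 2 → ℝ | 0 < z 0 ∧ z 1 = fglue (z 0)} :=
  ⟨fun _ hx => (fglue_continuousAt hx).continuousWithinAt, fglue_not_differentiableAt,
    fglue_zero_set, not_isSemialgebraic_graph_fglue⟩
end
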